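/- Let X and Y each admit a countable coinitial subset, let M be a pointwise finite-dimensional weakly exact persistence module over X×Y, and let R = (l⁺∩r⁻)×(b⁺∩t⁻) be a rectangle such that Ker⁺_{r,s} ∩ Ker⁺_{t,s} ⊆ Im⁺_{R,s} for all s ∈ R. Then there exists a vector subspace W of L⁺ := lim_{u∈R} V⁺_{R,u}(M) (inverse limit with projections π_u) that is a complement of L⁻ := ⋂_{u∈R} π_u⁻¹(V⁻_{R,u}(M)) in L⁺, such that the family of subspaces defined by (M_R)_u = π_u(W) for u ∈ R and (M_R)_u = 0 otherwise is a submodule of M, i.e. ρ_s^u((M_R)_s) ⊆ (M_R)_u for all s ≤ u in X×Y. -/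

import Mathlib

open CategoryTheory

attribute [local instance 10000] Preorder.smallCategory

attribute [local instance] Classical.propDecidable

abbrev PersistenceModule (K : Type) [Field K] (P : Type) [Preorder P] := P ⥤ ModuleCat.{0} K

variable (K : Type) [Field K]

/-- The internal linear map of a persistence module associated to `s ≤ t`. -/
def rho {P : Type} [Preorder P] (M : PersistenceModule K P) {s t : P} (h : s ≤ t) :
    M.obj s →ₗ[K] M.obj t :=
  (M.map (homOfLE h)).hom

def Pfd {P : Type} [Preorder P] (M : PersistenceModule K P) : Prop :=
  ∀ p : P, FiniteDimensional K (M.obj p)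

def IsConvexSet {P : Type} [Preorder P] (S : Set P) : Prop :=
  ∀ ⦃p s q : P⦄, p ≤ s → s ≤ q → p ∈ S → q ∈ S → s ∈ S

def IsConnectedSet {P : Type} [Preorder P] (S : Set P) : Prop :=
  ∀ p ∈ S, ∀ q ∈ S,
    Relation.ReflTransGen (fun a b => a ∈ S ∧ b ∈ S ∧ (a ≤ b ∨ b ≤ a)) p q

def IsIntervalSet {P : Type} [Preorder P] (S : Set P) : Prop :=
  IsConvexSet S ∧ IsConnectedSet S

def IsRectangleSet {X Y : Type} [Preorder X] [Preorder Y] (R : Set (X × Y)) : Prop :=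
  ∃ (I : Set X) (J : Set Y), IsIntervalSet I ∧ IsIntervalSet J ∧ R = I ×ˢ J

/-- The direct sum of the interval (indicator) modules of a family of convex sets. -/
noncomputable def intervalDirectSum {P : Type} [Preorder P] {ι : Type} (S : ι → Set P)
    (hS : ∀ i, IsConvexSet (S i)) : PersistenceModule K P where
  obj t := ModuleCat.of K ({i : ι // t ∈ S i} → K)
  map {s t} _ :=
    ModuleCat.ofHom (LinearMap.pi (fun j : {i : ι // t ∈ S i} =>
      if hs : (s : P) ∈ S j.1 then LinearMap.proj (⟨j.1, hs⟩ : {i : ι // s ∈ S i}) else 0))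
  map_id t := by
    refine ModuleCat.hom_ext (LinearMap.ext fun v => funext fun j => ?_)
    show ((if hs : (t : P) ∈ S j.1 then
        LinearMap.proj (⟨j.1, hs⟩ : {i : ι // t ∈ S i}) else 0 :
          ({i : ι // t ∈ S i} → K) →ₗ[K] K)) v = v j
    rw [dif_pos j.2]
    rfl
  map_comp {s t u} f g := by
    refine ModuleCat.hom_ext (LinearMap.ext fun v => funext fun j => ?_)
    show ((if hs : (s : P) ∈ S j.1 then
        LinearMap.proj (⟨j.1, hs⟩ : {i : ι // s ∈ S i}) else 0 :
          ({i : ι // s ∈ S i} → K) →ₗ[K] K)) v =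
      ((if ht : (t : P) ∈ S j.1 then
        LinearMap.proj (⟨j.1, ht⟩ : {i : ι // t ∈ S i}) else 0 :
          ({i : ι // t ∈ S i} → K) →ₗ[K] K))
        (LinearMap.pi (fun j' : {i : ι // t ∈ S i} =>
          (if hs : (s : P) ∈ S j'.1 then
            LinearMap.proj (⟨j'.1, hs⟩ : {i : ι // s ∈ S i}) else 0 :
              ({i : ι // s ∈ S i} → K) →ₗ[K] K)) v)
    by_cases hs : (s : P) ∈ S j.1
    · have ht : (t : P) ∈ S j.1 := hS j.1 (leOfHom f) (leOfHom g) hs j.2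
      rw [dif_pos hs, dif_pos ht, LinearMap.proj_apply, LinearMap.proj_apply,
        LinearMap.pi_apply, dif_pos hs]
      rfl
    · by_cases ht : (t : P) ∈ S j.1
      · rw [dif_neg hs, dif_pos ht, LinearMap.zero_apply, LinearMap.proj_apply,
          LinearMap.pi_apply, dif_neg hs, LinearMap.zero_apply]
      · rw [dif_neg hs, dif_neg ht, LinearMap.zero_apply, LinearMap.zero_apply]

def InDec {P : Type} [Preorder P] (M : PersistenceModule K P) (𝒮 : Set (Set P)) : Prop :=
  ∃ (ι : Type) (S : ι → Set P) (hS : ∀ i, IsConvexSet (S i)),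
    (∀ i, S i ∈ 𝒮) ∧ (∀ t : P, {i | t ∈ S i}.Finite) ∧
      Nonempty (M ≅ intervalDirectSum K S hS)

def restrictMod {P : Type} [Preorder P] (M : PersistenceModule K P) (Q : Set P) :
    PersistenceModule K ↥Q :=
  (show Monotone (Subtype.val : ↥Q → P) from fun _ _ h => h).functor ⋙ M

def restrictClass {P : Type} (𝒮 : Set (Set P)) (Q : Set P) : Set (Set ↥Q) :=
  {T | ∃ S ∈ 𝒮, T = Subtype.val ⁻¹' S}

/-- Weak exactness of a persistence bimodule. -/
def WeaklyExact {X Y : Type} [Preorder X] [Preorder Y]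
    (M : PersistenceModule K (X × Y)) : Prop :=
  ∀ (s t : X × Y) (h : s ≤ t),
    (LinearMap.range (rho K M h) =
      LinearMap.range (rho K M (show (t.1, s.2) ≤ t from ⟨le_rfl, h.2⟩)) ⊓
      LinearMap.range (rho K M (show (s.1, t.2) ≤ t from ⟨h.1, le_rfl⟩))) ∧
    (LinearMap.ker (rho K M h) =
      LinearMap.ker (rho K M (show s ≤ (t.1, s.2) from ⟨h.1, le_rfl⟩)) ⊔
      LinearMap.ker (rho K M (show s ≤ (s.1, t.2) from ⟨le_rfl, h.2⟩)))

/-! ## Cuts, rectangles via cuts, and the functorial filtration -/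

/-- A cut of a totally ordered set: a partition into a lower and an upper part. -/
structure Cut (X : Type) [LinearOrder X] where
  lower : Set X
  upper : Set X
  union_eq : lower ∪ upper = Set.univ
  lt : ∀ x ∈ lower, ∀ y ∈ upper, x < y

theorem Cut.mem_upper_of_le {X : Type} [LinearOrder X] (c : Cut X) {a b : X}
    (ha : a ∈ c.upper) (h : a ≤ b) : b ∈ c.upper := by
  have hb : b ∈ c.lower ∪ c.upper := by rw [c.union_eq]; trivial
  rcases hb with hb | hb
  · exact absurd (c.lt b hb a ha) (not_lt.2 h)
  · exact hb

theorem Cut.mem_lower_of_le {X : Type} [LinearOrder X] (c : Cut X) {a b : X}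
    (hb : b ∈ c.lower) (h : a ≤ b) : a ∈ c.lower := by
  have hb' : a ∈ c.lower ∪ c.upper := by rw [c.union_eq]; trivial
  rcases hb' with hb' | hb'
  · exact hb'
  · exact absurd (c.lt b hb a hb') (not_lt.2 h)

/-- The rectangle `(l⁺ ∩ r⁻) × (b⁺ ∩ t⁻)` associated to four cuts. -/
def rectOf {X Y : Type} [LinearOrder X] [LinearOrder Y]
    (l r : Cut X) (b t : Cut Y) : Set (X × Y) :=
  (l.upper ∩ r.lower) ×ˢ (b.upper ∩ t.lower)

theorem isConvex_rectOf {X Y : Type} [LinearOrder X] [LinearOrder Y]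
    (l r : Cut X) (b t : Cut Y) : IsConvexSet (rectOf l r b t) := by
  rintro p s q hps hsq ⟨⟨hp1, hp2⟩, hp3, hp4⟩ ⟨⟨hq1, hq2⟩, hq3, hq4⟩
  exact ⟨⟨l.mem_upper_of_le hp1 hps.1, r.mem_lower_of_le hq2 hsq.1⟩,
    b.mem_upper_of_le hp3 hps.2, t.mem_lower_of_le hq4 hsq.2⟩

/-- The upset `R⁺` of a subset of a poset. -/
def upsetOf {P : Type} [Preorder P] (R : Set P) : Set P := {u | ∃ s ∈ R, s ≤ u}

theorem isConvex_upsetOf {P : Type} [Preorder P] (R : Set P) : IsConvexSet (upsetOf R) := by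
  rintro p s q hps _ ⟨w, hw, hwp⟩ _
  exact ⟨w, hw, hwp.trans hps⟩

theorem IsConvexSet.inter {P : Type} [Preorder P] {A B : Set P}
    (hA : IsConvexSet A) (hB : IsConvexSet B) : IsConvexSet (A ∩ B) := by
  rintro p s q hps hsq ⟨hpA, hpB⟩ ⟨hqA, hqB⟩
  exact ⟨hA hps hsq hpA hqA, hB hps hsq hpB hqB⟩

variable {X Y : Type} [LinearOrder X] [LinearOrder Y]

/-- Horizontal image space `Im⁺_{l,u}`. -/
noncomputable def ImPlusH (M : PersistenceModule K (X × Y)) (l : Cut X) (u : X × Y) :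
    Submodule K (M.obj u) :=
  ⨅ (x : X) (h : x ∈ l.upper ∧ x ≤ u.1),
    LinearMap.range (rho K M (show (x, u.2) ≤ u from ⟨h.2, le_rfl⟩))

/-- Horizontal image space `Im⁻_{l,u}`. -/
noncomputable def ImMinusH (M : PersistenceModule K (X × Y)) (l : Cut X) (u : X × Y) :
    Submodule K (M.obj u) :=
  ⨆ (x : X) (h : x ∈ l.lower ∧ x ≤ u.1),
    LinearMap.range (rho K M (show (x, u.2) ≤ u from ⟨h.2, le_rfl⟩))

/-- Horizontal kernel space `Ker⁺_{r,u}`. -/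
noncomputable def KerPlusH (M : PersistenceModule K (X × Y)) (r : Cut X) (u : X × Y) :
    Submodule K (M.obj u) :=
  ⨅ (x : X) (h : x ∈ r.upper ∧ u.1 ≤ x),
    LinearMap.ker (rho K M (show u ≤ (x, u.2) from ⟨h.2, le_rfl⟩))

/-- Horizontal kernel space `Ker⁻_{r,u}`. -/
noncomputable def KerMinusH (M : PersistenceModule K (X × Y)) (r : Cut X) (u : X × Y) :
    Submodule K (M.obj u) :=
  ⨆ (x : X) (h : x ∈ r.lower ∧ u.1 ≤ x),
    LinearMap.ker (rho K M (show u ≤ (x, u.2) from ⟨h.2, le_rfl⟩))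

/-- Vertical image space `Im⁺_{b,u}`. -/
noncomputable def ImPlusV (M : PersistenceModule K (X × Y)) (b : Cut Y) (u : X × Y) :
    Submodule K (M.obj u) :=
  ⨅ (y : Y) (h : y ∈ b.upper ∧ y ≤ u.2),
    LinearMap.range (rho K M (show (u.1, y) ≤ u from ⟨le_rfl, h.2⟩))

/-- Vertical image space `Im⁻_{b,u}`. -/
noncomputable def ImMinusV (M : PersistenceModule K (X × Y)) (b : Cut Y) (u : X × Y) :
    Submodule K (M.obj u) :=
  ⨆ (y : Y) (h : y ∈ b.lower ∧ y ≤ u.2),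
    LinearMap.range (rho K M (show (u.1, y) ≤ u from ⟨le_rfl, h.2⟩))

/-- Vertical kernel space `Ker⁺_{t,u}`. -/
noncomputable def KerPlusV (M : PersistenceModule K (X × Y)) (t : Cut Y) (u : X × Y) :
    Submodule K (M.obj u) :=
  ⨅ (y : Y) (h : y ∈ t.upper ∧ u.2 ≤ y),
    LinearMap.ker (rho K M (show u ≤ (u.1, y) from ⟨le_rfl, h.2⟩))

/-- Vertical kernel space `Ker⁻_{t,u}`. -/
noncomputable def KerMinusV (M : PersistenceModule K (X × Y)) (t : Cut Y) (u : X × Y) :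
    Submodule K (M.obj u) :=
  ⨆ (y : Y) (h : y ∈ t.lower ∧ u.2 ≤ y),
    LinearMap.ker (rho K M (show u ≤ (u.1, y) from ⟨le_rfl, h.2⟩))

/-- `Im⁺_{R,u}`. -/
noncomputable def ImPlusR (M : PersistenceModule K (X × Y)) (l : Cut X) (b : Cut Y)
    (u : X × Y) : Submodule K (M.obj u) :=
  ImPlusH K M l u ⊓ ImPlusV K M b u

/-- `Im⁻_{R,u}`. -/
noncomputable def ImMinusR (M : PersistenceModule K (X × Y)) (l : Cut X) (b : Cut Y)
    (u : X × Y) : Submodule K (M.obj u) :=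
  (ImMinusH K M l u ⊔ ImMinusV K M b u) ⊓ ImPlusR K M l b u

/-- `Ker⁺_{R,u}`. -/
noncomputable def KerPlusR (M : PersistenceModule K (X × Y)) (r : Cut X) (t : Cut Y)
    (u : X × Y) : Submodule K (M.obj u) :=
  (KerPlusH K M r u ⊔ KerMinusV K M t u) ⊓ (KerMinusH K M r u ⊔ KerPlusV K M t u)

/-- `Ker⁻_{R,u}`. -/
noncomputable def KerMinusR (M : PersistenceModule K (X × Y)) (r : Cut X) (t : Cut Y)
    (u : X × Y) : Submodule K (M.obj u) :=
  KerMinusH K M r u ⊔ KerMinusV K M t u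

/-- The pointwise functorial filtration `V⁺_{R,u}(M)` (meaningful for `u ∈ R`). -/
noncomputable def VplusAt (M : PersistenceModule K (X × Y)) (l r : Cut X) (b t : Cut Y)
    (u : X × Y) : Submodule K (M.obj u) :=
  ImPlusR K M l b u ⊓ KerPlusR K M r t u

/-- The pointwise functorial filtration `V⁻_{R,u}(M)` (meaningful for `u ∈ R`). -/
noncomputable def VminusAt (M : PersistenceModule K (X × Y)) (l r : Cut X) (b t : Cut Y)
    (u : X × Y) : Submodule K (M.obj u) :=
  ImPlusR K M l b u ⊓ KerMinusR K M r t u ⊔ ImMinusR K M l b u ⊓ KerPlusR K M r t u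

/-- The extension of `V⁺_R(M)` to a family of subspaces over all of `X × Y`
(equal to `⋃_{s ∈ R, s ≤ u} ρ_s^u(V⁺_{R,s})` on the upset of `R` and `0` elsewhere). -/
noncomputable def VplusSub (M : PersistenceModule K (X × Y)) (l r : Cut X) (b t : Cut Y)
    (u : X × Y) : Submodule K (M.obj u) :=
  ⨆ (s : X × Y) (h : s ∈ rectOf l r b t ∧ s ≤ u),
    Submodule.map (rho K M h.2) (VplusAt K M l r b t s)

/-- The extension of `V⁻_R(M)` to a family of subspaces over all of `X × Y`. -/
noncomputable def VminusSub (M : PersistenceModule K (X × Y)) (l r : Cut X) (b t : Cut Y)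
    (u : X × Y) : Submodule K (M.obj u) :=
  ⨆ (s : X × Y) (h : s ∈ rectOf l r b t ∧ s ≤ u),
    Submodule.map (rho K M h.2) (VminusAt K M l r b t s)

theorem rho_comp {P : Type} [Preorder P] (M : PersistenceModule K P) {p q r : P}
    (h1 : p ≤ q) (h2 : q ≤ r) :
    (rho K M h2).comp (rho K M h1) = rho K M (h1.trans h2) := by
  rw [rho, rho, rho, ← homOfLE_comp h1 h2, M.map_comp]
  rfl

/-- The subfunctor of a persistence module determined by a compatible family of subspaces. -/
noncomputable def subfunctor {P : Type} [Preorder P] (M : PersistenceModule K P)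
    (S : ∀ p, Submodule K (M.obj p))
    (hS : ∀ (p q : P) (h : p ≤ q), (S p).map (rho K M h) ≤ S q) :
    PersistenceModule K P where
  obj p := ModuleCat.of K ↥(S p)
  map {p q} f :=
    ModuleCat.ofHom ((rho K M (leOfHom f)).restrict
      (p := S p) (q := S q) (fun x hx => hS p q (leOfHom f) ⟨x, hx, rfl⟩))
  map_id p := by
    refine ModuleCat.hom_ext (LinearMap.ext fun x => Subtype.ext ?_)
    show (M.map (𝟙 p)).hom x.1 = x.1
    rw [M.map_id]
    rfl
  map_comp {p q r} f g := by
    refine ModuleCat.hom_ext (LinearMap.ext fun x => Subtype.ext ?_)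
    show (M.map (homOfLE ((leOfHom f).trans (leOfHom g)))).hom x.1 =
      (M.map (homOfLE (leOfHom g))).hom ((M.map (homOfLE (leOfHom f))).hom x.1)
    rw [← homOfLE_comp (leOfHom f) (leOfHom g), M.map_comp]
    rfl

theorem vplusSub_mapsTo (M : PersistenceModule K (X × Y)) (l r : Cut X) (b t : Cut Y) :
    ∀ (p q : X × Y) (h : p ≤ q),
      Submodule.map (rho K M h) (VplusSub K M l r b t p) ≤ VplusSub K M l r b t q := by
  intro p q h
  rw [VplusSub, Submodule.map_iSup]
  refine iSup_le fun s => ?_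
  rw [Submodule.map_iSup]
  refine iSup_le fun hs => ?_
  rw [← Submodule.map_comp, rho_comp K M hs.2 h]
  exact le_iSup_of_le s (le_iSup_of_le ⟨hs.1, hs.2.trans h⟩ le_rfl)

theorem vminusSub_mapsTo (M : PersistenceModule K (X × Y)) (l r : Cut X) (b t : Cut Y) :
    ∀ (p q : X × Y) (h : p ≤ q),
      Submodule.map (rho K M h) (VminusSub K M l r b t p) ≤ VminusSub K M l r b t q := by
  intro p q h
  rw [VminusSub, Submodule.map_iSup]
  refine iSup_le fun s => ?_
  rw [Submodule.map_iSup]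
  refine iSup_le fun hs => ?_
  rw [← Submodule.map_comp, rho_comp K M hs.2 h]
  exact le_iSup_of_le s (le_iSup_of_le ⟨hs.1, hs.2.trans h⟩ le_rfl)

/-- The submodule `V⁺_R(M)` of `M`, as a persistence module. -/
noncomputable def VplusMod (M : PersistenceModule K (X × Y)) (l r : Cut X) (b t : Cut Y) :
    PersistenceModule K (X × Y) :=
  subfunctor K M (VplusSub K M l r b t) (vplusSub_mapsTo K M l r b t)

/-- The submodule `V⁻_R(M)` of `M`, as a persistence module. -/
noncomputable def VminusMod (M : PersistenceModule K (X × Y)) (l r : Cut X) (b t : Cut Y) :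
    PersistenceModule K (X × Y) :=
  subfunctor K M (VminusSub K M l r b t) (vminusSub_mapsTo K M l r b t)

/-- The relation `R' σ R` on rectangles, expressed on cut decompositions. -/
def SigmaRel (l' r' : Cut X) (b' t' : Cut Y) (l r : Cut X) (b t : Cut Y) : Prop :=
  l'.lower ⊆ l.lower ∧ b'.lower ⊆ b.lower ∧
    (r'.lower ⊂ r.lower ∨ t'.lower ⊂ t.lower ∨
      (r'.lower ⊆ r.lower ∧ t'.lower ⊆ t.lower))

/-- The relation `R' σ̊ R`: `R' σ R` and `R' ≠ R`. -/
def SigmaRelStrict (l' r' : Cut X) (b' t' : Cut Y) (l r : Cut X) (b t : Cut Y) : Prop :=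
  SigmaRel l' r' b' t' l r b t ∧ rectOf l' r' b' t' ≠ rectOf l r b t

/-- The interval (indicator) module of a single convex set. -/
noncomputable abbrev singleIntervalModule {P : Type} [Preorder P] (S : Set P)
    (hS : IsConvexSet S) : PersistenceModule K P :=
  intervalDirectSum K (fun _ : PUnit => S) (fun _ => hS)

/-! ## Inverse limits of the filtration, counting functor, rectangle filtrates -/

/-- The submodule of compatible sections of a persistence module over a subset of the poset
(the inverse limit of the corresponding restricted system). -/
noncomputable def compatSections {P : Type} [Preorder P] (M : PersistenceModule K P)
    (A : Set P) : Submodule K (∀ u : A, M.obj u.1) where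
  carrier := {v | ∀ (s u : A) (h : s.1 ≤ u.1), rho K M h (v s) = v u}
  add_mem' := by
    intro v w hv hw s u h
    show rho K M h (v s + w s) = v u + w u
    rw [map_add, hv s u h, hw s u h]
  zero_mem' := by
    intro s u h
    show rho K M h 0 = 0
    rw [map_zero]
  smul_mem' := by
    intro c v hv s u h
    show rho K M h (c • v s) = c • v u
    rw [map_smul, hv s u h]

/-- The projection from sections over `A` to the value at a point `u ∈ A`. -/
noncomputable def projAt {P : Type} [Preorder P] (M : PersistenceModule K P)
    (A : Set P) (u : P) (h : u ∈ A) : (∀ v : A, M.obj v.1) →ₗ[K] M.obj u :=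
  LinearMap.proj (⟨u, h⟩ : A)

variable {X Y : Type} [LinearOrder X] [LinearOrder Y]

/-- `L⁺ = lim_{u ∈ R} V⁺_{R,u}(M)`, realized as the compatible sections valued in the
pointwise filtration spaces. -/
noncomputable def limVplus (M : PersistenceModule K (X × Y)) (l r : Cut X) (b t : Cut Y) :
    Submodule K (∀ v : ↥(rectOf l r b t), M.obj v.1) :=
  compatSections K M (rectOf l r b t) ⊓
    Submodule.pi Set.univ (fun v : ↥(rectOf l r b t) => VplusAt K M l r b t v.1)

/-- `L⁻ = ⋂_{u ∈ R} π_u⁻¹(V⁻_{R,u}(M))` inside `L⁺`. -/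
noncomputable def limVminus (M : PersistenceModule K (X × Y)) (l r : Cut X) (b t : Cut Y) :
    Submodule K (∀ v : ↥(rectOf l r b t), M.obj v.1) :=
  limVplus K M l r b t ⊓
    Submodule.pi Set.univ (fun v : ↥(rectOf l r b t) => VminusAt K M l r b t v.1)

/-- The family of subspaces of `M` obtained by projecting a subspace `W` of the sections over
`A`: `u ↦ π_u(W)` for `u ∈ A`, and `0` elsewhere. -/
noncomputable def filtrateFam {P : Type} [Preorder P] (M : PersistenceModule K P) (A : Set P)
    (W : Submodule K (∀ v : A, M.obj v.1)) (u : P) : Submodule K (M.obj u) :=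
  ⨆ (h : u ∈ A), Submodule.map (projAt K M A u h) W

/-- `V⁻_{R,u}(M)` viewed as a submodule of `V⁺_{R,u}(M)`. -/
noncomputable def VminusIn (M : PersistenceModule K (X × Y)) (l r : Cut X) (b t : Cut Y)
    (u : X × Y) : Submodule K ↥(VplusAt K M l r b t u) :=
  Submodule.comap (VplusAt K M l r b t u).subtype (VminusAt K M l r b t u)

/-- The counting functor `C_R(M) = lim_{u ∈ R} V⁺_{R,u}(M) / V⁻_{R,u}(M)`, realized as the
submodule of families of cosets that are compatible under the induced transition maps. -/
noncomputable def countingSpace (M : PersistenceModule K (X × Y)) (l r : Cut X) (b t : Cut Y) :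
    Submodule K (∀ v : ↥(rectOf l r b t),
      (↥(VplusAt K M l r b t v.1) ⧸ VminusIn K M l r b t v.1)) where
  carrier := {q | ∀ (s u : ↥(rectOf l r b t)) (h : s.1 ≤ u.1),
    ∃ w : ↥(VplusAt K M l r b t s.1),
      Submodule.Quotient.mk w = q s ∧
      ∃ hw : rho K M h w.1 ∈ VplusAt K M l r b t u.1,
        Submodule.Quotient.mk (⟨rho K M h w.1, hw⟩ : ↥(VplusAt K M l r b t u.1)) = q u}
  zero_mem' := by
    intro s u h
    have hmem : rho K M h ((0 : ↥(VplusAt K M l r b t s.1)) : M.obj s.1) ∈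
        VplusAt K M l r b t u.1 := by
      rw [Submodule.coe_zero, map_zero]
      exact (VplusAt K M l r b t u.1).zero_mem
    refine ⟨0, by simp, hmem, ?_⟩
    have heq : (⟨rho K M h ((0 : ↥(VplusAt K M l r b t s.1)) : M.obj s.1), hmem⟩ :
        ↥(VplusAt K M l r b t u.1)) = 0 := by
      ext
      show rho K M h ((0 : ↥(VplusAt K M l r b t s.1)) : M.obj s.1) = (0 : M.obj u.1)
      rw [Submodule.coe_zero, map_zero]
    rw [heq]
    simp
  add_mem' := by
    intro q1 q2 hq1 hq2 s u h
    obtain ⟨w1, hw1, hmem1, hval1⟩ := hq1 s u h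
    obtain ⟨w2, hw2, hmem2, hval2⟩ := hq2 s u h
    have hmem : rho K M h ((w1 + w2 : ↥(VplusAt K M l r b t s.1)) : M.obj s.1) ∈
        VplusAt K M l r b t u.1 := by
      rw [Submodule.coe_add, map_add]
      exact (VplusAt K M l r b t u.1).add_mem hmem1 hmem2
    refine ⟨w1 + w2, ?_, hmem, ?_⟩
    · rw [Submodule.Quotient.mk_add, hw1, hw2]
      rfl
    · have heq : (⟨rho K M h ((w1 + w2 : ↥(VplusAt K M l r b t s.1)) : M.obj s.1), hmem⟩ :
          ↥(VplusAt K M l r b t u.1)) =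
          (⟨rho K M h w1.1, hmem1⟩ : ↥(VplusAt K M l r b t u.1)) +
          (⟨rho K M h w2.1, hmem2⟩ : ↥(VplusAt K M l r b t u.1)) := by
        ext
        show rho K M h ((w1 + w2 : ↥(VplusAt K M l r b t s.1)) : M.obj s.1) =
          rho K M h (w1 : M.obj s.1) + rho K M h (w2 : M.obj s.1)
        rw [Submodule.coe_add, map_add]
      rw [heq, Submodule.Quotient.mk_add, hval1, hval2]
      rfl
  smul_mem' := by
    intro c q hq s u h
    obtain ⟨w, hw, hmem, hval⟩ := hq s u h
    have hmem' : rho K M h ((c • w : ↥(VplusAt K M l r b t s.1)) : M.obj s.1) ∈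
        VplusAt K M l r b t u.1 := by
      rw [Submodule.coe_smul, map_smul]
      exact (VplusAt K M l r b t u.1).smul_mem c hmem
    refine ⟨c • w, ?_, hmem', ?_⟩
    · rw [Submodule.Quotient.mk_smul, hw]
      rfl
    · have heq : (⟨rho K M h ((c • w : ↥(VplusAt K M l r b t s.1)) : M.obj s.1), hmem'⟩ :
          ↥(VplusAt K M l r b t u.1)) =
          c • (⟨rho K M h w.1, hmem⟩ : ↥(VplusAt K M l r b t u.1)) := by
        ext
        show rho K M h ((c • w : ↥(VplusAt K M l r b t s.1)) : M.obj s.1) =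
          c • rho K M h (w : M.obj s.1)
        rw [Submodule.coe_smul, map_smul]
      rw [heq, Submodule.Quotient.mk_smul, hval]
      rfl

/-- The data of a rectangle filtrate of `M` for the rectangle determined by four cuts:
a choice of complement `W` of `L⁻` in `L⁺` computed inside the submodule `N = V⁺_R(M)`,
chosen inside `lim_{u∈R} (Ker⁺_{r,u}(N) ∩ Ker⁺_{t,u}(N))`. -/
structure RectangleFiltrate (M : PersistenceModule K (X × Y))
    (l r : Cut X) (b t : Cut Y) where
  W : Submodule K (∀ v : ↥(rectOf l r b t), (VplusMod K M l r b t).obj v.1)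
  le_lim : W ≤ limVplus K (VplusMod K M l r b t) l r b t
  le_ker : W ≤ Submodule.pi Set.univ (fun v : ↥(rectOf l r b t) =>
    KerPlusH K (VplusMod K M l r b t) r v.1 ⊓ KerPlusV K (VplusMod K M l r b t) t v.1)
  inf_eq : W ⊓ limVminus K (VplusMod K M l r b t) l r b t = ⊥
  sup_eq : W ⊔ limVminus K (VplusMod K M l r b t) l r b t =
    limVplus K (VplusMod K M l r b t) l r b t

/-- The subspace of `M` at index `u` determined by a rectangle filtrate (`π_u(W)` for
`u ∈ R` and `0` elsewhere, viewed inside `M` via the inclusion `V⁺_R(M) ⊆ M`). -/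
noncomputable def RectangleFiltrate.atPoint {M : PersistenceModule K (X × Y)}
    {l r : Cut X} {b t : Cut Y} (F : RectangleFiltrate K M l r b t) (u : X × Y) :
    Submodule K (M.obj u) :=
  Submodule.map (VplusSub K M l r b t u).subtype
    (filtrateFam K (VplusMod K M l r b t) (rectOf l r b t) F.W u)


/-! For `u ∈ R`, weak exactness together with `Ker⁺_{r,u} ∩ Ker⁺_{t,u} ⊆ Im⁺_{R,u}` splits
`V⁺_{R,u}` as `V⁻_{R,u} + (V⁺_{R,u} ∩ Ker⁺_{r,u} ∩ Ker⁺_{t,u})`, naturally in `u`. Over the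
codirected index set `R`, inverse limits of nonempty affine subspaces of finite-dimensional spaces
are nonempty: a minimal subsystem has surjective transition maps, and is then forced to consist of
single points. Hence the splitting passes to the limit, `L⁺ = L⁻ + C` with `C` the sections of
`L⁺` valued in `Ker⁺_r ∩ Ker⁺_t`. A complement `W` of `L⁻ ∩ C` in `C` is a complement of `L⁻` in
`L⁺`, and its projections form a submodule because sections in `C` die as soon as one leaves `R`
to the right or to the top. -/

section Functoriality

variable {P : Type} [Preorder P] (M : PersistenceModule K P)

theorem rho_self {p : P} (h : p ≤ p) (x : M.obj p) : rho K M h x = x := by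
  rw [rho, show homOfLE h = 𝟙 p from rfl, M.map_id]
  rfl

theorem rho_rho {p q u : P} (h₁ : p ≤ q) (h₂ : q ≤ u) (x : M.obj p) :
    rho K M h₂ (rho K M h₁ x) = rho K M (h₁.trans h₂) x :=
  LinearMap.congr_fun (rho_comp K M h₁ h₂) x

theorem ker_rho_le_ker_rho {p q u : P} (h₁ : p ≤ q) (h₂ : q ≤ u) :
    LinearMap.ker (rho K M h₁) ≤ LinearMap.ker (rho K M (h₁.trans h₂)) := fun x hx => by
  rw [LinearMap.mem_ker, ← rho_rho K M h₁ h₂, LinearMap.mem_ker.1 hx, map_zero]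

theorem map_range_rho_le {p q s u : P} (hps : p ≤ s) (hsu : s ≤ u) (hpq : p ≤ q) (hqu : q ≤ u) :
    (LinearMap.range (rho K M hps)).map (rho K M hsu) ≤ LinearMap.range (rho K M hqu) := by
  rintro _ ⟨_, ⟨x, rfl⟩, rfl⟩
  exact ⟨rho K M hpq x, by rw [rho_rho, rho_rho]⟩

theorem map_ker_rho_le {s p u q : P} (hsp : s ≤ p) (hsu : s ≤ u) (hpq : p ≤ q) (huq : u ≤ q) :
    (LinearMap.ker (rho K M hsp)).map (rho K M hsu) ≤ LinearMap.ker (rho K M huq) := by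
  rintro _ ⟨x, hx, rfl⟩
  rw [LinearMap.mem_ker, rho_rho]
  exact ker_rho_le_ker_rho K M hsp hpq hx

end Functoriality

theorem Cut.mem_lower_of_notMem_upper {X : Type} [LinearOrder X] (c : Cut X) {x : X}
    (hx : x ∉ c.upper) : x ∈ c.lower :=
  ((Set.mem_union x _ _).1 (c.union_eq ▸ Set.mem_univ x)).resolve_right hx

theorem Cut.max_mem_lower {X : Type} [LinearOrder X] (c : Cut X) {x y : X}
    (hx : x ∈ c.lower) (hy : y ∈ c.lower) : max x y ∈ c.lower :=
  max_rec' (· ∈ c.lower) hx hy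

section CutSpaces

variable (M : PersistenceModule K (X × Y))

theorem map_ImPlusH_le (hwe : WeaklyExact K M) (l : Cut X) {s u : X × Y} (h : s ≤ u) :
    (ImPlusH K M l s).map (rho K M h) ≤ ImPlusH K M l u := by
  rw [ImPlusH, ImPlusH]
  refine le_iInf₂ fun x hx => ?_
  rcases le_total x s.1 with hxs | hsx
  · exact (Submodule.map_mono (iInf₂_le x ⟨hx.1, hxs⟩)).trans
      (map_range_rho_le K M (p := (x, s.2)) (q := (x, u.2)) _ h ⟨le_rfl, h.2⟩ _)
  · -- `ρ_s^u` factors through `(x, s.2)`; weak exactness puts its image in that of `(x, u.2)`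
    rintro _ ⟨v, -, rfl⟩
    have hv : rho K M h v ∈ LinearMap.range (rho K M (show (x, s.2) ≤ u from ⟨hx.2, h.2⟩)) :=
      ⟨rho K M (show s ≤ (x, s.2) from ⟨hsx, le_rfl⟩) v, rho_rho K M _ _ v⟩
    rw [(hwe (x, s.2) u _).1] at hv
    exact hv.2

theorem map_ImPlusV_le (hwe : WeaklyExact K M) (b : Cut Y) {s u : X × Y} (h : s ≤ u) :
    (ImPlusV K M b s).map (rho K M h) ≤ ImPlusV K M b u := by
  rw [ImPlusV, ImPlusV]
  refine le_iInf₂ fun y hy => ?_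
  rcases le_total y s.2 with hys | hsy
  · exact (Submodule.map_mono (iInf₂_le y ⟨hy.1, hys⟩)).trans
      (map_range_rho_le K M (p := (s.1, y)) (q := (u.1, y)) _ h ⟨h.1, le_rfl⟩ _)
  · rintro _ ⟨v, -, rfl⟩
    have hv : rho K M h v ∈ LinearMap.range (rho K M (show (s.1, y) ≤ u from ⟨h.1, hy.2⟩)) :=
      ⟨rho K M (show s ≤ (s.1, y) from ⟨le_rfl, hsy⟩) v, rho_rho K M _ _ v⟩
    rw [(hwe (s.1, y) u _).1] at hv
    exact hv.1

theorem map_ImMinusH_le (l : Cut X) {s u : X × Y} (h : s ≤ u) :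
    (ImMinusH K M l s).map (rho K M h) ≤ ImMinusH K M l u := by
  rw [ImMinusH, ImMinusH]
  exact Submodule.map_le_iff_le_comap.2 <| iSup₂_le fun x hx => Submodule.map_le_iff_le_comap.1 <|
    (map_range_rho_le K M (p := (x, s.2)) (q := (x, u.2)) _ h ⟨le_rfl, h.2⟩
      ⟨hx.2.trans h.1, le_rfl⟩).trans
      (le_iSup₂_of_le x ⟨hx.1, hx.2.trans h.1⟩ le_rfl)

theorem map_ImMinusV_le (b : Cut Y) {s u : X × Y} (h : s ≤ u) :
    (ImMinusV K M b s).map (rho K M h) ≤ ImMinusV K M b u := by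
  rw [ImMinusV, ImMinusV]
  exact Submodule.map_le_iff_le_comap.2 <| iSup₂_le fun y hy => Submodule.map_le_iff_le_comap.1 <|
    (map_range_rho_le K M (p := (s.1, y)) (q := (u.1, y)) _ h ⟨h.1, le_rfl⟩
      ⟨le_rfl, hy.2.trans h.2⟩).trans
      (le_iSup₂_of_le y ⟨hy.1, hy.2.trans h.2⟩ le_rfl)

theorem map_KerPlusH_le (r : Cut X) {s u : X × Y} (h : s ≤ u) :
    (KerPlusH K M r s).map (rho K M h) ≤ KerPlusH K M r u := by
  rw [KerPlusH, KerPlusH]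
  exact le_iInf₂ fun x hx => (Submodule.map_mono (iInf₂_le x ⟨hx.1, h.1.trans hx.2⟩)).trans
    (map_ker_rho_le K M (p := (x, s.2)) (q := (x, u.2)) _ h ⟨le_rfl, h.2⟩ _)

theorem map_KerPlusV_le (t : Cut Y) {s u : X × Y} (h : s ≤ u) :
    (KerPlusV K M t s).map (rho K M h) ≤ KerPlusV K M t u := by
  rw [KerPlusV, KerPlusV]
  exact le_iInf₂ fun y hy => (Submodule.map_mono (iInf₂_le y ⟨hy.1, h.2.trans hy.2⟩)).trans
    (map_ker_rho_le K M (p := (s.1, y)) (q := (u.1, y)) _ h ⟨h.1, le_rfl⟩ _)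

theorem map_KerMinusH_le (r : Cut X) {s u : X × Y} (h : s ≤ u) (hu : u.1 ∈ r.lower) :
    (KerMinusH K M r s).map (rho K M h) ≤ KerMinusH K M r u := by
  rw [KerMinusH, KerMinusH]
  exact Submodule.map_le_iff_le_comap.2 <| iSup₂_le fun x hx => Submodule.map_le_iff_le_comap.1 <|
    (map_ker_rho_le K M (p := (x, s.2)) (q := (max x u.1, u.2)) _ h ⟨le_max_left _ _, h.2⟩
      ⟨le_max_right _ _, le_rfl⟩).trans
      (le_iSup₂_of_le (max x u.1) ⟨r.max_mem_lower hx.1 hu, le_max_right _ _⟩ le_rfl)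

theorem map_KerMinusV_le (t : Cut Y) {s u : X × Y} (h : s ≤ u) (hu : u.2 ∈ t.lower) :
    (KerMinusV K M t s).map (rho K M h) ≤ KerMinusV K M t u := by
  rw [KerMinusV, KerMinusV]
  exact Submodule.map_le_iff_le_comap.2 <| iSup₂_le fun y hy => Submodule.map_le_iff_le_comap.1 <|
    (map_ker_rho_le K M (p := (s.1, y)) (q := (u.1, max y u.2)) _ h ⟨h.1, le_max_left _ _⟩
      ⟨le_rfl, le_max_right _ _⟩).trans
      (le_iSup₂_of_le (max y u.2) ⟨t.max_mem_lower hy.1 hu, le_max_right _ _⟩ le_rfl)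

end CutSpaces

section Filtration

variable (M : PersistenceModule K (X × Y))

theorem map_ImPlusR_le (hwe : WeaklyExact K M) (l : Cut X) (b : Cut Y) {s u : X × Y}
    (h : s ≤ u) : (ImPlusR K M l b s).map (rho K M h) ≤ ImPlusR K M l b u :=
  (Submodule.map_inf_le _).trans
    (inf_le_inf (map_ImPlusH_le K M hwe l h) (map_ImPlusV_le K M hwe b h))

theorem map_ImMinusR_le (hwe : WeaklyExact K M) (l : Cut X) (b : Cut Y) {s u : X × Y}
    (h : s ≤ u) : (ImMinusR K M l b s).map (rho K M h) ≤ ImMinusR K M l b u := by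
  refine (Submodule.map_inf_le _).trans (inf_le_inf ?_ (map_ImPlusR_le K M hwe l b h))
  rw [Submodule.map_sup]
  exact sup_le_sup (map_ImMinusH_le K M l h) (map_ImMinusV_le K M b h)

theorem map_KerPlusR_le (r : Cut X) (t : Cut Y) {s u : X × Y} (h : s ≤ u)
    (hu₁ : u.1 ∈ r.lower) (hu₂ : u.2 ∈ t.lower) :
    (KerPlusR K M r t s).map (rho K M h) ≤ KerPlusR K M r t u := by
  refine (Submodule.map_inf_le _).trans (inf_le_inf ?_ ?_) <;> rw [Submodule.map_sup]
  · exact sup_le_sup (map_KerPlusH_le K M r h) (map_KerMinusV_le K M t h hu₂)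
  · exact sup_le_sup (map_KerMinusH_le K M r h hu₁) (map_KerPlusV_le K M t h)

theorem map_KerMinusR_le (r : Cut X) (t : Cut Y) {s u : X × Y} (h : s ≤ u)
    (hu₁ : u.1 ∈ r.lower) (hu₂ : u.2 ∈ t.lower) :
    (KerMinusR K M r t s).map (rho K M h) ≤ KerMinusR K M r t u := by
  rw [KerMinusR, Submodule.map_sup]
  exact sup_le_sup (map_KerMinusH_le K M r h hu₁) (map_KerMinusV_le K M t h hu₂)

variable (l r : Cut X) (b t : Cut Y)

theorem map_VplusAt_le (hwe : WeaklyExact K M) {s u : X × Y} (h : s ≤ u)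
    (hu : u ∈ rectOf l r b t) :
    (VplusAt K M l r b t s).map (rho K M h) ≤ VplusAt K M l r b t u :=
  (Submodule.map_inf_le _).trans (inf_le_inf (map_ImPlusR_le K M hwe l b h)
    (map_KerPlusR_le K M r t h hu.1.2 hu.2.2))

theorem map_VminusAt_le (hwe : WeaklyExact K M) {s u : X × Y} (h : s ≤ u)
    (hu : u ∈ rectOf l r b t) :
    (VminusAt K M l r b t s).map (rho K M h) ≤ VminusAt K M l r b t u := by
  rw [VminusAt, Submodule.map_sup]
  exact sup_le_sup
    ((Submodule.map_inf_le _).trans (inf_le_inf (map_ImPlusR_le K M hwe l b h)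
      (map_KerMinusR_le K M r t h hu.1.2 hu.2.2)))
    ((Submodule.map_inf_le _).trans (inf_le_inf (map_ImMinusR_le K M hwe l b h)
      (map_KerPlusR_le K M r t h hu.1.2 hu.2.2)))

theorem KerMinusH_le_KerPlusH (u : X × Y) : KerMinusH K M r u ≤ KerPlusH K M r u := by
  rw [KerMinusH, KerPlusH]
  exact iSup₂_le fun x hx => le_iInf₂ fun x' hx' =>
    ker_rho_le_ker_rho K M (q := (x, u.2)) (u := (x', u.2)) _ ⟨(r.lt x hx.1 x' hx'.1).le, le_rfl⟩

theorem KerMinusV_le_KerPlusV (u : X × Y) : KerMinusV K M t u ≤ KerPlusV K M t u := by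
  rw [KerMinusV, KerPlusV]
  exact iSup₂_le fun y hy => le_iInf₂ fun y' hy' =>
    ker_rho_le_ker_rho K M (q := (u.1, y)) (u := (u.1, y')) _ ⟨le_rfl, (t.lt y hy.1 y' hy'.1).le⟩

theorem VminusAt_le_VplusAt (u : X × Y) : VminusAt K M l r b t u ≤ VplusAt K M l r b t u :=
  sup_le (inf_le_inf_left _ (le_inf (sup_le_sup_right (KerMinusH_le_KerPlusH K M r u) _)
      (sup_le_sup_left (KerMinusV_le_KerPlusV K M t u) _)))
    (inf_le_inf_right _ inf_le_right)

end Filtration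

section Decomposition

variable (M : PersistenceModule K (X × Y)) {l r : Cut X} {b t : Cut Y}

theorem ker_rho_le_KerMinusH {u : X × Y} {x : X} (hx : x ∈ r.lower ∧ u.1 ≤ x) :
    LinearMap.ker (rho K M (show u ≤ (x, u.2) from ⟨hx.2, le_rfl⟩)) ≤ KerMinusH K M r u := by
  rw [KerMinusH]
  exact le_iSup₂_of_le x hx le_rfl

theorem ker_rho_le_KerMinusV {u : X × Y} {y : Y} (hy : y ∈ t.lower ∧ u.2 ≤ y) :
    LinearMap.ker (rho K M (show u ≤ (u.1, y) from ⟨le_rfl, hy.2⟩)) ≤ KerMinusV K M t u := by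
  rw [KerMinusV]
  exact le_iSup₂_of_le y hy le_rfl

theorem exists_mem_ker_rho_of_mem_KerMinusH {u : X × Y} (hu : u.1 ∈ r.lower) {v : M.obj u}
    (hv : v ∈ KerMinusH K M r u) : ∃ (x : X) (hx : x ∈ r.lower ∧ u.1 ≤ x),
      v ∈ LinearMap.ker (rho K M (show u ≤ (x, u.2) from ⟨hx.2, le_rfl⟩)) := by
  rw [KerMinusH, iSup_subtype'] at hv
  have : Nonempty {x // x ∈ r.lower ∧ u.1 ≤ x} := ⟨⟨u.1, hu, le_rfl⟩⟩
  have hdir : Directed (· ≤ ·) fun x : {x // x ∈ r.lower ∧ u.1 ≤ x} =>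
      LinearMap.ker (rho K M (show u ≤ (x.1, u.2) from ⟨x.2.2, le_rfl⟩)) := by
    rintro ⟨x, hx⟩ ⟨x', hx'⟩
    exact ⟨⟨max x x', r.max_mem_lower hx.1 hx'.1, hx.2.trans (le_max_left _ _)⟩,
      ker_rho_le_ker_rho K M (q := (x, u.2)) (u := (max x x', u.2)) _
        ⟨le_max_left _ _, le_rfl⟩,
      ker_rho_le_ker_rho K M (q := (x', u.2)) (u := (max x x', u.2)) _
        ⟨le_max_right _ _, le_rfl⟩⟩
  obtain ⟨⟨x, hx⟩, hvx⟩ := (Submodule.mem_iSup_of_directed _ hdir).1 hv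
  exact ⟨x, hx, hvx⟩

theorem exists_mem_ker_rho_of_mem_KerMinusV {u : X × Y} (hu : u.2 ∈ t.lower) {v : M.obj u}
    (hv : v ∈ KerMinusV K M t u) : ∃ (y : Y) (hy : y ∈ t.lower ∧ u.2 ≤ y),
      v ∈ LinearMap.ker (rho K M (show u ≤ (u.1, y) from ⟨le_rfl, hy.2⟩)) := by
  rw [KerMinusV, iSup_subtype'] at hv
  have : Nonempty {y // y ∈ t.lower ∧ u.2 ≤ y} := ⟨⟨u.2, hu, le_rfl⟩⟩
  have hdir : Directed (· ≤ ·) fun y : {y // y ∈ t.lower ∧ u.2 ≤ y} =>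
      LinearMap.ker (rho K M (show u ≤ (u.1, y.1) from ⟨le_rfl, y.2.2⟩)) := by
    rintro ⟨y, hy⟩ ⟨y', hy'⟩
    exact ⟨⟨max y y', t.max_mem_lower hy.1 hy'.1, hy.2.trans (le_max_left _ _)⟩,
      ker_rho_le_ker_rho K M (q := (u.1, y)) (u := (u.1, max y y')) _
        ⟨le_rfl, le_max_left _ _⟩,
      ker_rho_le_ker_rho K M (q := (u.1, y')) (u := (u.1, max y y')) _
        ⟨le_rfl, le_max_right _ _⟩⟩
  obtain ⟨⟨y, hy⟩, hvy⟩ := (Submodule.mem_iSup_of_directed _ hdir).1 hv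
  exact ⟨y, hy, hvy⟩

theorem KerPlusR_le_KerMinusR_sup (hwe : WeaklyExact K M) {u : X × Y} (hu₁ : u.1 ∈ r.lower)
    (hu₂ : u.2 ∈ t.lower) :
    KerPlusR K M r t u ≤ KerMinusR K M r t u ⊔ (KerPlusH K M r u ⊓ KerPlusV K M t u) := by
  intro v hv
  obtain ⟨a, ha, b', hb', rfl⟩ := Submodule.mem_sup.1 (Submodule.mem_inf.1 hv).1
  obtain ⟨c, hc, e, he, hce⟩ := Submodule.mem_sup.1 (Submodule.mem_inf.1 hv).2
  obtain ⟨x, hx, hcx⟩ := exists_mem_ker_rho_of_mem_KerMinusH K M hu₁ hc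
  obtain ⟨y, hy, hby⟩ := exists_mem_ker_rho_of_mem_KerMinusV K M hu₂ hb'
  have hxy : u ≤ (x, y) := ⟨hx.2, hy.2⟩
  -- `a - e = c - b'` dies at `(x, y)`, so weak exactness splits it along the two axes
  have hae : a - e ∈ LinearMap.ker (rho K M hxy) := by
    rw [show a - e = c - b' by rw [sub_eq_sub_iff_add_eq_add, hce]]
    exact sub_mem (ker_rho_le_ker_rho K M (q := (x, u.2)) (u := (x, y)) _ ⟨le_rfl, hy.2⟩ hcx)
      (ker_rho_le_ker_rho K M (q := (u.1, y)) (u := (x, y)) _ ⟨hx.2, le_rfl⟩ hby)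
  rw [(hwe u (x, y) hxy).2] at hae
  obtain ⟨c', hc', b'', hb'', hcb⟩ := Submodule.mem_sup.1 hae
  have hc'H := ker_rho_le_KerMinusH K M hx hc'
  have hb''V := ker_rho_le_KerMinusV K M hy hb''
  have hk : a - c' = e + b'' := by
    rw [sub_eq_iff_eq_add, ← sub_add_cancel a e, ← hcb]
    abel
  refine Submodule.mem_sup.2 ⟨c' + b', add_mem (Submodule.mem_sup_left hc'H)
    (Submodule.mem_sup_right hb'), a - c', Submodule.mem_inf.2 ⟨?_, ?_⟩, by abel⟩
  · exact sub_mem ha (KerMinusH_le_KerPlusH K M r u hc'H)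
  · exact hk ▸ add_mem he (KerMinusV_le_KerPlusV K M t u hb''V)

theorem VplusAt_le_VminusAt_sup (hwe : WeaklyExact K M) {u : X × Y} (hu : u ∈ rectOf l r b t)
    (hcond : KerPlusH K M r u ⊓ KerPlusV K M t u ≤ ImPlusR K M l b u) :
    VplusAt K M l r b t u ≤ VminusAt K M l r b t u ⊔
      VplusAt K M l r b t u ⊓ (KerPlusH K M r u ⊓ KerPlusV K M t u) := by
  have hker : KerPlusH K M r u ⊓ KerPlusV K M t u ≤ KerPlusR K M r t u :=
    inf_le_inf le_sup_left le_sup_right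
  calc VplusAt K M l r b t u
      ≤ ImPlusR K M l b u ⊓ (KerMinusR K M r t u ⊔ KerPlusH K M r u ⊓ KerPlusV K M t u) :=
        inf_le_inf_left _ (KerPlusR_le_KerMinusR_sup K M hwe hu.1.2 hu.2.2)
    _ = ImPlusR K M l b u ⊓ KerMinusR K M r t u ⊔ KerPlusH K M r u ⊓ KerPlusV K M t u :=
        (inf_sup_assoc_of_le _ hcond).symm
    _ ≤ _ := sup_le_sup le_sup_left (le_inf (le_inf hcond hker) le_rfl)

end Decomposition

theorem exists_le_inf_eq_bot_sup_eq {α : Type} [Lattice α] [BoundedOrder α] [IsModularLattice α]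
    [ComplementedLattice α] {a b c : α} (hab : a ≤ b) (hcb : c ≤ b) (hb : b ≤ a ⊔ c) :
    ∃ w ≤ c, w ⊓ a = ⊥ ∧ w ⊔ a = b := by
  obtain ⟨w, hdisj, hsup⟩ := IsModularLattice.exists_disjoint_and_sup_eq (inf_le_right : a ⊓ c ≤ c)
  have hwc : w ≤ c := hsup ▸ le_sup_right
  refine ⟨w, hwc, ?_, le_antisymm (sup_le (hwc.trans hcb) hab) (hb.trans ?_)⟩
  · rw [← disjoint_iff.1 hdisj.symm, inf_comm a c, ← inf_assoc, inf_eq_left.2 hwc]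
  · exact sup_le le_sup_right
      (hsup.symm.le.trans (sup_le (inf_le_left.trans le_sup_right) le_sup_left))

theorem AffineSubspace.nonempty_iInf_of_directed {V : Type} [AddCommGroup V] [Module K V]
    [FiniteDimensional K V] {ι : Type} [Nonempty ι] (f : ι → AffineSubspace K V)
    (hne : ∀ i, (f i : Set V).Nonempty) (hf : Directed (· ≥ ·) f) :
    ((⨅ i, f i : AffineSubspace K V) : Set V).Nonempty := by
  -- a member of least dimension lies below every other member
  let i₀ := Function.argmin fun i => Module.finrank K (f i).direction
  obtain ⟨p, hp⟩ := hne i₀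
  refine ⟨p, (AffineSubspace.mem_iInf_iff _ _).2 fun i => ?_⟩
  obtain ⟨m, hm₀, hmi⟩ := hf i₀ i
  have : f m = f i₀ := AffineSubspace.eq_of_direction_eq_of_nonempty_of_le
    (Submodule.eq_of_le_of_finrank_le (AffineSubspace.direction_le hm₀)
      (Function.argmin_le (fun i => Module.finrank K (f i).direction) m)) (hne m) hm₀
  exact hmi (this ▸ hp)

section InverseLimit

variable {P : Type} [Preorder P] (M : PersistenceModule K P) (A : Set P)

structure IsAffineSubsystem (S : ∀ i : A, AffineSubspace K (M.obj i.1)) : Prop where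
  nonempty : ∀ i, (S i : Set (M.obj i.1)).Nonempty
  mapsTo : ∀ i j : A, ∀ h : i.1 ≤ j.1, ∀ x ∈ S i, rho K M h x ∈ S j

variable {K M A}

theorem IsAffineSubsystem.map_rho_le_map_rho {S : ∀ i : A, AffineSubspace K (M.obj i.1)}
    (hS : IsAffineSubsystem K M A S) {m i j : A} (hmi : m.1 ≤ i.1) (hij : i.1 ≤ j.1) :
    (S m).map (rho K M (hmi.trans hij)).toAffineMap ≤ (S i).map (rho K M hij).toAffineMap := by
  rintro _ ⟨z, hz, rfl⟩
  exact ⟨rho K M hmi z, hS.mapsTo m i hmi z hz, rho_rho K M hmi hij z⟩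

theorem exists_le_minimal_isAffineSubsystem (hM : Pfd K M)
    {T : ∀ i : A, AffineSubspace K (M.obj i.1)} (hT : IsAffineSubsystem K M A T) :
    ∃ S ≤ T, Minimal (IsAffineSubsystem K M A) S := by
  -- the pointwise intersection of a chain is a subsystem, nonempty by finite dimensionality
  have hchain : ∀ c ⊆ {S : (∀ i : A, AffineSubspace K (M.obj i.1))ᵒᵈ |
      IsAffineSubsystem K M A (OrderDual.ofDual S)}, IsChain (· ≤ ·) c → ∀ S₀ ∈ c,
      ∃ lb ∈ {S | IsAffineSubsystem K M A (OrderDual.ofDual S)}, ∀ S ∈ c, S ≤ lb := by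
    intro c hc hchain S₀ hS₀
    have : Nonempty c := ⟨⟨S₀, hS₀⟩⟩
    refine ⟨OrderDual.toDual fun i => ⨅ S : c, OrderDual.ofDual S.1 i, ⟨fun i => ?_, ?_⟩,
      fun S hS i => iInf_le (fun S : c => OrderDual.ofDual S.1 i) ⟨S, hS⟩⟩
    · have := hM i.1
      refine AffineSubspace.nonempty_iInf_of_directed K _ (fun S => (hc S.2).nonempty i) ?_
      intro S S'
      rcases hchain.total S.2 S'.2 with h | h
      · exact ⟨S', h i, le_rfl⟩
      · exact ⟨S, le_rfl, h i⟩
    · exact fun i j h x hx => (AffineSubspace.mem_iInf_iff _ _).2 fun S =>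
        (hc S.2).mapsTo i j h x ((AffineSubspace.mem_iInf_iff _ _).1 hx S)
  obtain ⟨S, hST, hS⟩ := zorn_le_nonempty₀ _ hchain (OrderDual.toDual T) hT
  exact ⟨OrderDual.ofDual S, hST, hS.1, fun S' hS' h => hS.2 hS' h⟩

variable [IsCodirectedOrder A]

theorem le_map_rho_of_minimal (hM : Pfd K M) {S : ∀ i : A, AffineSubspace K (M.obj i.1)}
    (hS : Minimal (IsAffineSubsystem K M A) S) {i j : A} (h : i.1 ≤ j.1) :
    S j ≤ (S i).map (rho K M h).toAffineMap := by
  -- the images of all earlier members form a subsystem below `S`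
  let S' : ∀ j : A, AffineSubspace K (M.obj j.1) := fun j =>
    ⨅ i : {i : A // i.1 ≤ j.1}, (S i).map (rho K M i.2).toAffineMap
  have hS' : IsAffineSubsystem K M A S' := by
    refine ⟨fun j => ?_, fun j k hjk x hx => (AffineSubspace.mem_iInf_iff _ _).2 fun i => ?_⟩
    · have := hM j.1
      have : Nonempty {i : A // i.1 ≤ j.1} := ⟨⟨j, le_rfl⟩⟩
      refine AffineSubspace.nonempty_iInf_of_directed K _ (fun i => ?_) fun i i' => ?_
      · obtain ⟨z, hz⟩ := hS.1.nonempty i.1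
        exact ⟨rho K M i.2 z, z, hz, rfl⟩
      · obtain ⟨m, hmi, hmi'⟩ := exists_le_le i.1 i'.1
        exact ⟨⟨m, hmi.trans i.2⟩, hS.1.map_rho_le_map_rho hmi i.2,
          hS.1.map_rho_le_map_rho hmi' i'.2⟩
    · obtain ⟨m, hmi, hmj⟩ := exists_le_le i.1 j
      obtain ⟨z, hz, rfl⟩ := (AffineSubspace.mem_iInf_iff _ _).1 hx ⟨m, hmj⟩
      exact hS.1.map_rho_le_map_rho hmi i.2 ⟨z, hz, (rho_rho K M hmj hjk z).symm⟩
  have hS'S : S' ≤ S := fun j =>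
    (iInf_le _ ⟨j, le_rfl⟩).trans fun _ ⟨x, hx, hxy⟩ => hxy ▸ (rho_self K M _ x).symm ▸ hx
  exact (hS.2 hS' hS'S j).trans (iInf_le (fun i : {i : A // i.1 ≤ j.1} =>
    (S i).map (rho K M i.2).toAffineMap) ⟨i, h⟩)

theorem subsingleton_of_minimal (hM : Pfd K M) {S : ∀ i : A, AffineSubspace K (M.obj i.1)}
    (hS : Minimal (IsAffineSubsystem K M A) S) (i : A) : (S i : Set (M.obj i.1)).Subsingleton := by
  intro x hx y hy
  -- the points of `S` that become equal to `x` wherever both are defined form a subsystem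
  let S' : ∀ j : A, AffineSubspace K (M.obj j.1) := fun j =>
    S j ⊓ ⨅ k : {k : A // j.1 ≤ k.1 ∧ i.1 ≤ k.1},
      (affineSpan K {rho K M k.2.2 x}).comap (rho K M k.2.1).toAffineMap
  have hmem : ∀ j (z : M.obj j.1), z ∈ S' j ↔
      z ∈ S j ∧ ∀ k : {k : A // j.1 ≤ k.1 ∧ i.1 ≤ k.1}, rho K M k.2.1 z = rho K M k.2.2 x := by
    intro j z
    simp only [S', AffineSubspace.mem_inf_iff, AffineSubspace.mem_iInf_iff,
      AffineSubspace.mem_comap, AffineSubspace.mem_affineSpan_singleton,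
      LinearMap.coe_toAffineMap]
  have hS' : IsAffineSubsystem K M A S' := by
    refine ⟨fun j => ?_, fun j j' h z hz => ?_⟩
    · obtain ⟨m, hmj, hmi⟩ := exists_le_le j i
      obtain ⟨z, hz, rfl⟩ := le_map_rho_of_minimal hM hS hmi hx
      refine ⟨rho K M hmj z, (hmem j _).2 ⟨hS.1.mapsTo m j hmj z hz, fun k => ?_⟩⟩
      simp only [LinearMap.coe_toAffineMap, rho_rho]
    · obtain ⟨hzS, hzx⟩ := (hmem j z).1 hz
      refine (hmem j' _).2 ⟨hS.1.mapsTo j j' h z hzS, fun k => ?_⟩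
      rw [rho_rho, ← hzx ⟨k.1, h.trans k.2.1, k.2.2⟩]
  have hyx := ((hmem i y).1 (hS.2 hS' (fun j => inf_le_left) i hy)).2 ⟨i, le_rfl, le_rfl⟩
  rw [rho_self, rho_self] at hyx
  exact hyx.symm

theorem exists_mem_compatSections_forall_mem (hM : Pfd K M)
    {T : ∀ i : A, AffineSubspace K (M.obj i.1)} (hT : IsAffineSubsystem K M A T) :
    ∃ v ∈ compatSections K M A, ∀ i, v i ∈ T i := by
  obtain ⟨S, hST, hS⟩ := exists_le_minimal_isAffineSubsystem hM hT
  choose v hv using hS.1.nonempty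
  exact ⟨v, fun i j h => subsingleton_of_minimal hM hS j (hS.1.mapsTo i j h _ (hv i)) (hv j),
    fun i => hST i (hv i)⟩

theorem compatSections_inf_pi_sup_le (hM : Pfd K M) {F G : ∀ i : A, Submodule K (M.obj i.1)}
    (hF : ∀ i j : A, ∀ h : i.1 ≤ j.1, (F i).map (rho K M h) ≤ F j)
    (hG : ∀ i j : A, ∀ h : i.1 ≤ j.1, (G i).map (rho K M h) ≤ G j) :
    compatSections K M A ⊓ Submodule.pi Set.univ (fun i => F i ⊔ G i) ≤
      compatSections K M A ⊓ Submodule.pi Set.univ F ⊔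
        compatSections K M A ⊓ Submodule.pi Set.univ G := by
  rintro w ⟨hw, hwFG⟩
  -- the `G`-part is a compatible choice of points in the affine subspaces `(w + F) ∩ G`
  let T : ∀ i : A, AffineSubspace K (M.obj i.1) := fun i =>
    AffineSubspace.mk' (w i) (F i) ⊓ (G i).toAffineSubspace
  have hmem : ∀ i z, z ∈ T i ↔ z - w i ∈ F i ∧ z ∈ G i := fun i z => by
    simp only [T, AffineSubspace.mem_inf_iff, AffineSubspace.mem_mk', vsub_eq_sub,
      Submodule.mem_toAffineSubspace]
  have hT : IsAffineSubsystem K M A T := by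
    refine ⟨fun i => ?_, fun i j h z hz => ?_⟩
    · obtain ⟨f, hf, g, hg, hfg⟩ := Submodule.mem_sup.1 (Submodule.mem_pi.1 hwFG i trivial)
      exact ⟨g, (hmem i g).2 ⟨by rw [← hfg, sub_add_cancel_right]; exact neg_mem hf, hg⟩⟩
    · obtain ⟨hzF, hzG⟩ := (hmem i z).1 hz
      refine (hmem j _).2 ⟨?_, hG i j h ⟨z, hzG, rfl⟩⟩
      rw [← hw i j h, ← map_sub]
      exact hF i j h ⟨_, hzF, rfl⟩
  obtain ⟨g, hg, hgT⟩ := exists_mem_compatSections_forall_mem hM hT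
  refine Submodule.mem_sup.2 ⟨w - g, ⟨sub_mem hw hg, fun i _ => ?_⟩, g,
    ⟨hg, fun i _ => ((hmem i _).1 (hgT i)).2⟩, sub_add_cancel w g⟩
  rw [Pi.sub_apply, ← neg_sub]
  exact neg_mem ((hmem i _).1 (hgT i)).1

end InverseLimit

instance isCodirectedOrder_rectOf (l r : Cut X) (b t : Cut Y) :
    IsCodirectedOrder (rectOf l r b t) :=
  ⟨fun u v => ⟨⟨(min u.1.1 v.1.1, min u.1.2 v.1.2),
    ⟨min_rec' (· ∈ l.upper) u.2.1.1 v.2.1.1, min_rec' (· ∈ r.lower) u.2.1.2 v.2.1.2⟩,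
    min_rec' (· ∈ b.upper) u.2.2.1 v.2.2.1, min_rec' (· ∈ t.lower) u.2.2.2 v.2.2.2⟩,
    ⟨min_le_left _ _, min_le_left _ _⟩, ⟨min_le_right _ _, min_le_right _ _⟩⟩⟩

section Filtrate

variable {P : Type} [Preorder P] (M : PersistenceModule K P) {A : Set P}
  (W : Submodule K (∀ v : A, M.obj v.1))

theorem filtrateFam_of_mem {u : P} (hu : u ∈ A) :
    filtrateFam K M A W u = W.map (projAt K M A u hu) :=
  iSup_pos hu

theorem filtrateFam_of_notMem {u : P} (hu : u ∉ A) : filtrateFam K M A W u = ⊥ :=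
  iSup_neg hu

theorem map_filtrateFam_le_of_mem (hW : W ≤ compatSections K M A) {s u : P} (h : s ≤ u)
    (hs : s ∈ A) (hu : u ∈ A) :
    (filtrateFam K M A W s).map (rho K M h) ≤ filtrateFam K M A W u := by
  rw [filtrateFam_of_mem K M W hs, filtrateFam_of_mem K M W hu]
  rintro _ ⟨_, ⟨w, hw, rfl⟩, rfl⟩
  exact ⟨w, hw, (hW hw ⟨s, hs⟩ ⟨u, hu⟩ h).symm⟩

end Filtrate

section Rectangle

variable (M : PersistenceModule K (X × Y)) {l r : Cut X} {b t : Cut Y}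

theorem limVplus_le_limVminus_sup (hM : Pfd K M) (hwe : WeaklyExact K M)
    (hcond : ∀ s ∈ rectOf l r b t, KerPlusH K M r s ⊓ KerPlusV K M t s ≤ ImPlusR K M l b s) :
    limVplus K M l r b t ≤ limVminus K M l r b t ⊔ limVplus K M l r b t ⊓
      Submodule.pi Set.univ fun v => KerPlusH K M r v.1 ⊓ KerPlusV K M t v.1 := by
  have hsplit := compatSections_inf_pi_sup_le hM
    (F := fun v : rectOf l r b t => VminusAt K M l r b t v.1)
    (G := fun v => VplusAt K M l r b t v.1 ⊓ (KerPlusH K M r v.1 ⊓ KerPlusV K M t v.1))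
    (fun _ j h => map_VminusAt_le K M l r b t hwe h j.2)
    (fun _ j h => (Submodule.map_inf_le _).trans (inf_le_inf (map_VplusAt_le K M l r b t hwe h j.2)
      ((Submodule.map_inf_le _).trans (inf_le_inf (map_KerPlusH_le K M r h)
        (map_KerPlusV_le K M t h)))))
  refine (inf_le_inf_left _ (Submodule.pi_mono fun v _ =>
    VplusAt_le_VminusAt_sup K M hwe v.2 (hcond v.1 v.2))).trans (hsplit.trans (sup_le_sup ?_ ?_))
  · exact le_inf (inf_le_inf_left _ (Submodule.pi_mono fun v _ =>
      VminusAt_le_VplusAt K M l r b t v.1)) inf_le_right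
  · exact le_inf (inf_le_inf_left _ (Submodule.pi_mono fun v _ => inf_le_left))
      (inf_le_right.trans (Submodule.pi_mono fun v _ => inf_le_right))

theorem mem_upper_or_mem_upper_of_notMem_rectOf {s u : X × Y} (hs : s ∈ rectOf l r b t)
    (h : s ≤ u) (hu : u ∉ rectOf l r b t) : u.1 ∈ r.upper ∨ u.2 ∈ t.upper := by
  by_contra! H
  exact hu ⟨⟨l.mem_upper_of_le hs.1.1 h.1, r.mem_lower_of_notMem_upper H.1⟩,
    b.mem_upper_of_le hs.2.1 h.2, t.mem_lower_of_notMem_upper H.2⟩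

theorem KerPlusH_le_ker_rho {s u : X × Y} (h : s ≤ u) (hu : u.1 ∈ r.upper) :
    KerPlusH K M r s ≤ LinearMap.ker (rho K M h) := by
  rw [KerPlusH]
  exact (iInf₂_le u.1 ⟨hu, h.1⟩).trans
    (ker_rho_le_ker_rho K M (q := (u.1, s.2)) (u := u) _ ⟨le_rfl, h.2⟩)

theorem KerPlusV_le_ker_rho {s u : X × Y} (h : s ≤ u) (hu : u.2 ∈ t.upper) :
    KerPlusV K M t s ≤ LinearMap.ker (rho K M h) := by
  rw [KerPlusV]
  exact (iInf₂_le u.2 ⟨hu, h.2⟩).trans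
    (ker_rho_le_ker_rho K M (q := (s.1, u.2)) (u := u) _ ⟨h.1, le_rfl⟩)

theorem map_filtrateFam_rectOf_le {W : Submodule K (∀ v : ↥(rectOf l r b t), M.obj v.1)}
    (hWc : W ≤ compatSections K M (rectOf l r b t))
    (hWk : W ≤ Submodule.pi Set.univ fun v => KerPlusH K M r v.1 ⊓ KerPlusV K M t v.1)
    {s u : X × Y} (h : s ≤ u) :
    (filtrateFam K M (rectOf l r b t) W s).map (rho K M h) ≤
      filtrateFam K M (rectOf l r b t) W u := by
  by_cases hs : s ∈ rectOf l r b t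
  swap
  · rw [filtrateFam_of_notMem K M W hs, Submodule.map_bot]
    exact bot_le
  by_cases hu : u ∈ rectOf l r b t
  · exact map_filtrateFam_le_of_mem K M W hWc h hs hu
  rw [filtrateFam_of_mem K M W hs]
  rintro _ ⟨_, ⟨w, hw, rfl⟩, rfl⟩
  have hk := Submodule.mem_pi.1 (hWk hw) ⟨s, hs⟩ trivial
  have hzero : rho K M h (w ⟨s, hs⟩) = 0 := by
    rcases mem_upper_or_mem_upper_of_notMem_rectOf hs h hu with hr | ht
    · exact KerPlusH_le_ker_rho K M h hr hk.1
    · exact KerPlusV_le_ker_rho K M h ht hk.2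
  exact hzero ▸ zero_mem _

end Rectangle


theorem exists_complement_defining_submodule_general
    (K : Type) [Field K] (X Y : Type) [LinearOrder X] [LinearOrder Y]
    (M : PersistenceModule K (X × Y)) (hM : Pfd K M) (hwe : WeaklyExact K M)
    (l r : Cut X) (b t : Cut Y)
    (hcond : ∀ s ∈ rectOf l r b t,
      KerPlusH K M r s ⊓ KerPlusV K M t s ≤ ImPlusR K M l b s) :
    ∃ W : Submodule K (∀ v : ↥(rectOf l r b t), M.obj v.1),
      W ≤ limVplus K M l r b t ∧
      W ⊓ limVminus K M l r b t = ⊥ ∧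
      W ⊔ limVminus K M l r b t = limVplus K M l r b t ∧
      ∀ (s u : X × Y) (h : s ≤ u),
        Submodule.map (rho K M h) (filtrateFam K M (rectOf l r b t) W s) ≤
          filtrateFam K M (rectOf l r b t) W u := by
  obtain ⟨W, hWC, hWinf, hWsup⟩ := exists_le_inf_eq_bot_sup_eq inf_le_left inf_le_left
    (limVplus_le_limVminus_sup K M hM hwe hcond)
  have hWL : W ≤ limVplus K M l r b t := hWC.trans inf_le_left
  exact ⟨W, hWL, hWinf, hWsup, fun s u h =>
    map_filtrateFam_rectOf_le K M (hWL.trans inf_le_left) (hWC.trans inf_le_right) h⟩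

/-- **Statement 11.** Under the linking condition `Ker⁺_{r,s} ∩ Ker⁺_{t,s} ⊆ Im⁺_{R,s}` on `R`,
there is a vector space complement `W` of `L⁻` in `L⁺` whose projections define a submodule
of `M`. -/
theorem exists_complement_defining_submodule
    (K : Type) [Field K] (X Y : Type) [LinearOrder X] [LinearOrder Y]
    (hX : ∃ C : Set X, C.Countable ∧ ∀ x : X, ∃ c ∈ C, c ≤ x)
    (hY : ∃ C : Set Y, C.Countable ∧ ∀ y : Y, ∃ c ∈ C, c ≤ y)
    (M : PersistenceModule K (X × Y)) (hM : Pfd K M) (hwe : WeaklyExact K M)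
    (l r : Cut X) (b t : Cut Y)
    (hcond : ∀ s ∈ rectOf l r b t,
      KerPlusH K M r s ⊓ KerPlusV K M t s ≤ ImPlusR K M l b s) :
    ∃ W : Submodule K (∀ v : ↥(rectOf l r b t), M.obj v.1),
      W ≤ limVplus K M l r b t ∧
      W ⊓ limVminus K M l r b t = ⊥ ∧
      W ⊔ limVminus K M l r b t = limVplus K M l r b t ∧
      ∀ (s u : X × Y) (h : s ≤ u),
        Submodule.map (rho K M h) (filtrateFam K M (rectOf l r b t) W s) ≤
          filtrateFam K M (rectOf l r b t) W u :=
  exists_complement_defining_submodule_general K X Y M hM hwe l r b t hcond
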